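/- arXiv:2212.11371 — 2 statements merged into one kernel-verified Lean document; each statement's English description precedes it below -/
import Mathlib

section
/- For every bi-infinite sequence α = (α_n)_{n∈ℤ} with α_n ∈ {1,2} for all n, and all integers j ≥ 1 and k ≥ 1, the following lower bound holds: λ₀(α) ≥ [α₀; α₁, …, α_j, S(j)] + [0; α_{−1}, …, α_{−k}, S(k)], where S(n) denotes the periodic tail 2,1,2,1,2,1,… if n is even, and the periodic tail 1,2,1,2,1,2,… if n is odd. Explicitly: if k and j are both even, λ₀(α) ≥ [α₀; α₁, …, α_j, \overline{2,1}] + [0; α_{−1}, …, α_{−k}, \overline{2,1}]; if k is even and j is odd, λ₀(α) ≥ [α₀; α₁, …, α_j, \overline{1,2}] + [0; α_{−1}, …, α_{−k}, \overline{2,1}]; if k is odd and j is even, λ₀(α) ≥ [α₀; α₁, …, α_j, \overline{2,1}] + [0; α_{−1}, …, α_{−k}, \overline{1,2}]; if k and j are both odd, λ₀(α) ≥ [α₀; α₁, …, α_j, \overline{1,2}] + [0; α_{−1}, …, α_{−k}, \overline{1,2}]. -/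
open Filter Set MeasureTheory
open scoped ENNReal

/-- Finite continued fraction `[a 0; a 1, ..., a n]`. -/
noncomputable def cfConv : (ℕ → ℝ) → ℕ → ℝ
  | a, 0 => a 0
  | a, n + 1 => a 0 + 1 / cfConv (fun i => a (i + 1)) n

/-- Value of the infinite continued fraction `[a 0; a 1, a 2, ...]`,
as the limit of its convergents. -/
noncomputable def cfVal (a : ℕ → ℝ) : ℝ := limUnder atTop (cfConv a)

/-- `λ_k(α) = [α_k; α_{k+1}, ...] + [0; α_{k-1}, α_{k-2}, ...]`. -/
noncomputable def lambdaVal (α : ℤ → ℕ) (k : ℤ) : ℝ :=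
  cfVal (fun n => (α (k + n) : ℝ)) +
  cfVal (fun n => if n = 0 then 0 else (α (k - n) : ℝ))

/-- The Markov value `m(α) = sup_{k ∈ ℤ} λ_k(α)`. -/
noncomputable def markovValue (α : ℤ → ℕ) : ℝ := ⨆ k : ℤ, lambdaVal α k

/-- The Markov spectrum. -/
def markovSpectrum : Set ℝ :=
  { x | ∃ α : ℤ → ℕ, (∀ n, 0 < α n) ∧ BddAbove (range (lambdaVal α)) ∧
      markovValue α = x }

/-- The dimension function `d(t) = dim_H (M ∩ (-∞, t))`. -/
noncomputable def dimFun (t : ℝ) : ℝ≥0∞ := dimH (markovSpectrum ∩ Iio t)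

/-- `[a 0; a 1, …, a j, \overline{b₁, b₂}]` : the infinite continued fraction
keeping the entries of `a` up to index `j` and with eventually periodic tail
alternating `b₁, b₂, b₁, b₂, …` from position `j + 1` on. -/
noncomputable def tailCF (a : ℕ → ℝ) (j : ℕ) (b₁ b₂ : ℝ) : ℝ :=
  cfVal (fun n => if n ≤ j then a n else if (n - j) % 2 = 1 then b₁ else b₂)

/-!
Continued fractions are increasing in their even-indexed and decreasing in their odd-indexed
partial quotients, and the limit preserves this. Among sequences with entries in `[1, 2]`, the
tail taking the value `1` at even and `2` at odd positions is therefore the least one, and both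
choices of `\overline{b₁, b₂}` in the statement give exactly this tail after position `j`.
Convergence comes from `[c; d, x] - [c; d, y] = (x - y) / ((d x + 1) (d y + 1))`: two steps of
the continued fraction shrink distances by a factor `4` once the partial quotients are `≥ 1`.
-/

open scoped Topology

section ContinuedFraction

variable {a b : ℕ → ℝ}

lemma cfConv_succ (a : ℕ → ℝ) (n : ℕ) :
    cfConv a (n + 1) = a 0 + 1 / cfConv (fun i => a (i + 1)) n := rfl

lemma cfConv_pos (ha : ∀ i, 0 < a i) (n : ℕ) : 0 < cfConv a n := by
  induction n generalizing a with
  | zero => exact ha 0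
  | succ n ih =>
    rw [cfConv_succ]
    have := ih fun i => ha (i + 1)
    have := ha 0
    positivity

lemma one_le_cfConv (ha : ∀ i, 1 ≤ a i) (n : ℕ) : 1 ≤ cfConv a n := by
  cases n with
  | zero => exact ha 0
  | succ n =>
    rw [cfConv_succ]
    have := cfConv_pos (fun i => one_pos.trans_le (ha (i + 1))) n
    have := ha 0
    have : 0 < 1 / cfConv (fun i => a (i + 1)) n := by positivity
    linarith

lemma cfConv_le_cfConv_of_alternating (ha : ∀ i, 0 < a (i + 1)) (hb : ∀ i, 0 < b (i + 1))
    (heven : ∀ i, i % 2 = 0 → a i ≤ b i) (hodd : ∀ i, i % 2 = 1 → b i ≤ a i) (n : ℕ) :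
    cfConv a n ≤ cfConv b n := by
  induction n generalizing a b with
  | zero => exact heven 0 rfl
  | succ n ih =>
    rw [cfConv_succ, cfConv_succ]
    have htail : cfConv (fun i => b (i + 1)) n ≤ cfConv (fun i => a (i + 1)) n :=
      ih (fun i => hb (i + 1)) (fun i => ha (i + 1))
        (fun i hi => hodd (i + 1) (by omega)) (fun i hi => heven (i + 1) (by omega))
    have hpos := cfConv_pos hb n
    have := one_div_le_one_div_of_le hpos htail
    linarith [heven 0 rfl]

lemma abs_cfConv_succ_sub_le_one (h0 : a 0 = b 0) (ha : ∀ i, 1 ≤ a (i + 1))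
    (hb : ∀ i, 1 ≤ b (i + 1)) (p q : ℕ) :
    |cfConv a (p + 1) - cfConv b (q + 1)| ≤ 1 := by
  rw [cfConv_succ, cfConv_succ, h0, abs_sub_le_iff]
  have hx := one_le_cfConv ha p
  have hy := one_le_cfConv hb q
  have : 0 < 1 / cfConv (fun i => a (i + 1)) p := by positivity
  have : 0 < 1 / cfConv (fun i => b (i + 1)) q := by positivity
  have : 1 / cfConv (fun i => a (i + 1)) p ≤ 1 := by rw [div_le_one (by linarith)]; exact hx
  have : 1 / cfConv (fun i => b (i + 1)) q ≤ 1 := by rw [div_le_one (by linarith)]; exact hy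
  constructor <;> linarith

lemma abs_cf_two_step_sub_le {c d x y : ℝ} (hd : 1 ≤ d) (hx : 1 ≤ x) (hy : 1 ≤ y) :
    |(c + 1 / (d + 1 / x)) - (c + 1 / (d + 1 / y))| ≤ |x - y| / 4 := by
  have hdx : 2 ≤ d * x + 1 := by nlinarith
  have hdy : 2 ≤ d * y + 1 := by nlinarith
  have hden : 4 ≤ (d * x + 1) * (d * y + 1) := by nlinarith
  have hx0 : x ≠ 0 := by positivity
  have hy0 : y ≠ 0 := by positivity
  have key : (c + 1 / (d + 1 / x)) - (c + 1 / (d + 1 / y)) =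
      (x - y) / ((d * x + 1) * (d * y + 1)) := by
    field_simp
    ring
  rw [key, abs_div, abs_of_pos (by linarith : (0 : ℝ) < (d * x + 1) * (d * y + 1))]
  exact div_le_div_of_nonneg_left (abs_nonneg _) (by norm_num) hden

lemma abs_cfConv_sub_le_of_eqOn (n : ℕ) (hab : ∀ i < 2 * n + 1, a i = b i)
    (ha : ∀ i, 1 ≤ a (i + 1)) (hb : ∀ i, 1 ≤ b (i + 1)) {p q : ℕ}
    (hp : 2 * n < p) (hq : 2 * n < q) :
    |cfConv a p - cfConv b q| ≤ (1 / 4) ^ n := by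
  induction n generalizing a b p q with
  | zero =>
    obtain ⟨p, rfl⟩ : ∃ p', p = p' + 1 := ⟨p - 1, by omega⟩
    obtain ⟨q, rfl⟩ : ∃ q', q = q' + 1 := ⟨q - 1, by omega⟩
    simpa using abs_cfConv_succ_sub_le_one (hab 0 (by omega)) ha hb p q
  | succ n ih =>
    obtain ⟨p, rfl⟩ : ∃ p', p = p' + 2 := ⟨p - 2, by omega⟩
    obtain ⟨q, rfl⟩ : ∃ q', q = q' + 2 := ⟨q - 2, by omega⟩
    have htail := ih (a := fun i => a (i + 2)) (b := fun i => b (i + 2))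
      (fun i hi => hab (i + 2) (by omega)) (fun i => ha (i + 2)) (fun i => hb (i + 2))
      (p := p) (q := q) (by omega) (by omega)
    have hstep := abs_cf_two_step_sub_le (c := a 0) (ha 0)
      (one_le_cfConv (fun i => ha (i + 1)) p) (one_le_cfConv (fun i => hb (i + 1)) q)
    calc |cfConv a (p + 2) - cfConv b (q + 2)|
        = |(a 0 + 1 / (a 1 + 1 / cfConv (fun i => a (i + 2)) p)) -
            (a 0 + 1 / (a 1 + 1 / cfConv (fun i => b (i + 2)) q))| := by
          show |(a 0 + 1 / (a 1 + 1 / _)) - (b 0 + 1 / (b 1 + 1 / _))| = _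
          rw [hab 0 (by omega), hab 1 (by omega)]
      _ ≤ (1 / 4) ^ n / 4 := hstep.trans (by gcongr)
      _ = (1 / 4) ^ (n + 1) := by ring

lemma tendsto_cfConv_cfVal (ha : ∀ i, 1 ≤ a (i + 1)) :
    Tendsto (cfConv a) atTop (𝓝 (cfVal a)) := by
  have hcauchy : CauchySeq (cfConv a) := by
    refine Metric.cauchySeq_iff'.2 fun ε hε => ?_
    obtain ⟨n, hn⟩ := exists_pow_lt_of_lt_one hε (by norm_num : (1 / 4 : ℝ) < 1)
    refine ⟨2 * n + 1, fun m hm => ?_⟩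
    rw [Real.dist_eq]
    exact (abs_cfConv_sub_le_of_eqOn n (fun _ _ => rfl) ha ha (by omega) (by omega)).trans_lt hn
  obtain ⟨L, hL⟩ := cauchySeq_tendsto_of_complete hcauchy
  rwa [cfVal, hL.limUnder_eq]

lemma cfVal_le_cfVal_of_alternating (ha : ∀ i, 1 ≤ a (i + 1)) (hb : ∀ i, 1 ≤ b (i + 1))
    (heven : ∀ i, i % 2 = 0 → a i ≤ b i) (hodd : ∀ i, i % 2 = 1 → b i ≤ a i) :
    cfVal a ≤ cfVal b :=
  le_of_tendsto_of_tendsto' (tendsto_cfConv_cfVal ha) (tendsto_cfConv_cfVal hb)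
    (cfConv_le_cfConv_of_alternating (fun i => one_pos.trans_le (ha i))
      (fun i => one_pos.trans_le (hb i)) heven hodd)

end ContinuedFraction

lemma tailCF_alternating_eq (a : ℕ → ℝ) (j : ℕ) :
    tailCF a j (if j % 2 = 0 then 2 else 1) (if j % 2 = 0 then 1 else 2) =
      cfVal (fun n => if n ≤ j then a n else if n % 2 = 0 then 1 else 2) := by
  rw [tailCF]
  congr 1
  funext n
  split_ifs <;> first | rfl | omega

lemma tailCF_le_cfVal {a : ℕ → ℝ} (ha : ∀ i, a (i + 1) ∈ Icc 1 2) (j : ℕ) :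
    tailCF a j (if j % 2 = 0 then 2 else 1) (if j % 2 = 0 then 1 else 2) ≤ cfVal a := by
  have hmem : ∀ i, 0 < i → a i ∈ Icc 1 2 := fun i hi => by
    obtain ⟨i, rfl⟩ : ∃ i', i = i' + 1 := ⟨i - 1, by omega⟩
    exact ha i
  rw [tailCF_alternating_eq]
  refine cfVal_le_cfVal_of_alternating (fun i => ?_) (fun i => (ha i).1)
    (fun i hi => ?_) (fun i hi => ?_)
  · split_ifs
    · exact (ha i).1
    all_goals norm_num
  · split_ifs
    · exact le_rfl
    · exact (hmem i (by omega)).1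
  · split_ifs
    · exact le_rfl
    · omega
    · exact (hmem i (by omega)).2

theorem lambda_zero_lower_bound_general (α : ℤ → ℕ) (hα : ∀ n, α n = 1 ∨ α n = 2)
    (j k : ℕ) :
    tailCF (fun n => (α n : ℝ)) j
        (if j % 2 = 0 then 2 else 1) (if j % 2 = 0 then 1 else 2) +
      tailCF (fun n => if n = 0 then 0 else (α (-(n : ℤ)) : ℝ)) k
        (if k % 2 = 0 then 2 else 1) (if k % 2 = 0 then 1 else 2) ≤
      lambdaVal α 0 := by
  have hα' : ∀ n, (α n : ℝ) ∈ Icc 1 2 := fun n => by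
    rcases hα n with h | h <;> norm_num [h]
  simp only [lambdaVal, zero_add, zero_sub]
  exact add_le_add (tailCF_le_cfVal (fun i => hα' _) j)
    (tailCF_le_cfVal (fun i => by simpa using hα' _) k)

/-- Lower bound on `λ₀(α)` for `α ∈ {1,2}^ℤ`: truncating at positions `j` (forward)
and `-k` (backward) and appending the periodic tail `\overline{2,1}` if the
truncation index is even, and `\overline{1,2}` if it is odd, can only decrease
the value. -/
theorem lambda_zero_lower_bound (α : ℤ → ℕ) (hα : ∀ n, α n = 1 ∨ α n = 2)
    (j k : ℕ) (hj : 1 ≤ j) (hk : 1 ≤ k) :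
    tailCF (fun n => (α n : ℝ)) j
        (if j % 2 = 0 then 2 else 1) (if j % 2 = 0 then 1 else 2) +
      tailCF (fun n => if n = 0 then 0 else (α (-(n : ℤ)) : ℝ)) k
        (if k % 2 = 0 then 2 else 1) (if k % 2 = 0 then 1 else 2) ≤
      lambdaVal α 0 :=
  lambda_zero_lower_bound_general α hα j k
end

section
/- Every bi-infinite sequence α ∈ {1,2}^ℤ that contains the word (2,1,2) as a factor satisfies m(α) ≥ √85/3, and the value √85/3 is attained: the periodic sequence of period (2,1,2), which contains the factor (2,1,2), has Markov value [2; \overline{1,2,2}] + [0; \overline{2,1,2}] = √85/3. Thus √85/3 is the smallest Markov value among {1,2}-sequences containing the factor (2,1,2). -/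
open Filter Set MeasureTheory
open scoped ENNReal

/-- A finite word `w` is a factor of the bi-infinite sequence `α`. -/
def hasFactor (α : ℤ → ℕ) (w : List ℕ) : Prop :=
  ∃ j : ℤ, ∀ i : Fin w.length, α (j + (i : ℕ)) = w.get i

/-- The bi-infinite periodic sequence of period `(2,1,2)`. -/
def per212 : ℤ → ℕ := fun n => if n % 3 = 1 then 1 else 2

open Topology

/-! If every `λ_k(α)` were below `√85/3`, the words `2121`, `221222`, `2212211` and their
reversals could not occur in `α`: bounding the unknown tails of the two continued fractions
by `[4/3, 11/4]` already gives `λ > 461/150 > √85/3` at a suitable letter of each. Since `λ_k`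
is symmetric under reflecting the sequence about `k`, these exclusions force an occurrence
of `212` to extend in both directions to the `(2,1,2)`-periodic sequence. There `λ` at the
first letter of a period is `x + 1/x` for `x = [2; 1, 2, 2, 1, 2, …]`, a root of
`3x² - 7x - 3`, so it equals `√85/3`. -/

section DigitsInOneTwo

variable {a : ℕ → ℝ}

lemma cfConv_mem_Icc (ha : ∀ n, a n ∈ Icc (1 : ℝ) 2) (n : ℕ) :
    cfConv a n ∈ Icc (1 : ℝ) 3 := by
  induction n generalizing a with
  | zero => exact ⟨(ha 0).1, (ha 0).2.trans (by norm_num)⟩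
  | succ n ih =>
    obtain ⟨h1, -⟩ := ih fun i => ha (i + 1)
    have hinv_pos : 0 < 1 / cfConv (fun i => a (i + 1)) n := one_div_pos.2 (by linarith)
    have hinv_le : 1 / cfConv (fun i => a (i + 1)) n ≤ 1 := (div_le_one (by linarith)).2 h1
    rw [cfConv]
    exact ⟨by linarith [(ha 0).1], by linarith [(ha 0).2]⟩

lemma four_thirds_le_cfConv_succ (ha : ∀ n, a n ∈ Icc (1 : ℝ) 2) (n : ℕ) :
    4 / 3 ≤ cfConv a (n + 1) := by
  obtain ⟨h1, h3⟩ := cfConv_mem_Icc (fun i => ha (i + 1)) n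
  have : (1 : ℝ) / 3 ≤ 1 / cfConv (fun i => a (i + 1)) n :=
    one_div_le_one_div_of_le (by linarith) h3
  rw [cfConv]
  linarith [(ha 0).1]

/-- The tails of consecutive convergents multiply to at least `4/3`, whence the rate. -/
lemma dist_cfConv_succ_le (ha : ∀ n, a n ∈ Icc (1 : ℝ) 2) (n : ℕ) :
    dist (cfConv a n) (cfConv a (n + 1)) ≤ (3 / 4) ^ n := by
  induction n generalizing a with
  | zero =>
    have h1 := (ha 1).1
    simp only [cfConv, pow_zero, dist_self_add_right, norm_div, norm_one, Real.norm_eq_abs,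
      abs_of_pos (by linarith : (0 : ℝ) < a 1)]
    exact (div_le_one (by linarith)).2 h1
  | succ n ih =>
    set y := cfConv (fun i => a (i + 1)) n
    set x := cfConv (fun i => a (i + 1)) (n + 1)
    have hy : 1 ≤ y := (cfConv_mem_Icc (fun i => ha (i + 1)) n).1
    have hx : 4 / 3 ≤ x := four_thirds_le_cfConv_succ (fun i => ha (i + 1)) n
    have hxy : dist y x ≤ (3 / 4) ^ n := ih fun i => ha (i + 1)
    calc dist (cfConv a (n + 1)) (cfConv a (n + 2))
        = dist y x / (y * x) := by
          rw [cfConv, cfConv, dist_add_left, one_div, one_div,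
            dist_inv_inv₀ (by positivity) (by positivity), Real.norm_of_nonneg (by positivity),
            Real.norm_of_nonneg (by positivity)]
      _ ≤ dist y x * (3 / 4) := by
          have hyx : 4 / 3 ≤ y * x := by nlinarith
          rw [div_le_iff₀ (by positivity)]
          nlinarith [mul_le_mul_of_nonneg_left hyx (dist_nonneg (x := y) (y := x))]
      _ ≤ (3 / 4) ^ (n + 1) := by
          rw [pow_succ]
          gcongr

lemma tendsto_cfConv (ha : ∀ n, a n ∈ Icc (1 : ℝ) 2) :
    Tendsto (cfConv a) atTop (𝓝 (cfVal a)) :=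
  (cauchySeq_of_le_geometric (3 / 4) 1 (by norm_num)
    (by simpa using dist_cfConv_succ_le ha)).tendsto_limUnder

lemma cfVal_mem_Icc (ha : ∀ n, a n ∈ Icc (1 : ℝ) 2) : cfVal a ∈ Icc (1 : ℝ) 3 :=
  isClosed_Icc.mem_of_tendsto (tendsto_cfConv ha) (Eventually.of_forall (cfConv_mem_Icc ha))

lemma cfVal_eq_add_inv (ha : ∀ n, a (n + 1) ∈ Icc (1 : ℝ) 2) :
    cfVal a = a 0 + (cfVal fun n => a (n + 1))⁻¹ := by
  have hne : (cfVal fun n => a (n + 1)) ≠ 0 := by linarith [(cfVal_mem_Icc ha).1]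
  have h := ((tendsto_cfConv ha).inv₀ hne).const_add (a 0)
  refine ((tendsto_add_atTop_iff_nat 1).1 ?_).limUnder_eq
  simpa only [cfConv, one_div] using h

end DigitsInOneTwo

noncomputable def forwardCF (α : ℤ → ℕ) (k : ℤ) : ℝ := cfVal fun n => (α (k + n) : ℝ)

def seqRev (α : ℤ → ℕ) : ℤ → ℕ := fun n => α (-n)

lemma seqRev_seqRev (α : ℤ → ℕ) : seqRev (seqRev α) = α := by
  funext n
  simp [seqRev]

lemma forwardCF_comp_add (α : ℤ → ℕ) (m k : ℤ) :
    forwardCF (fun n => α (n + m)) k = forwardCF α (k + m) := by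
  unfold forwardCF
  congr 1
  funext n
  rw [add_right_comm]

lemma lambdaVal_comp_add (α : ℤ → ℕ) (m k : ℤ) :
    lambdaVal (fun n => α (n + m)) k = lambdaVal α (k + m) := by
  unfold lambdaVal
  congr 1 <;> congr 1 <;> funext n
  · rw [add_right_comm]
  · simp only [sub_add_eq_add_sub]

section DigitsOneOrTwo

variable {α : ℤ → ℕ} (hα : ∀ n, α n = 1 ∨ α n = 2)
include hα

lemma digit_mem_Icc (n : ℤ) : (α n : ℝ) ∈ Icc (1 : ℝ) 2 := by
  rcases hα n with h | h <;> norm_num [h]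

lemma seqRev_eq_one_or_two (n : ℤ) : seqRev α n = 1 ∨ seqRev α n = 2 := hα (-n)

lemma forwardCF_eq_add_inv (k : ℤ) : forwardCF α k = α k + (forwardCF α (k + 1))⁻¹ := by
  rw [forwardCF, cfVal_eq_add_inv fun n => digit_mem_Icc hα _]
  simp only [forwardCF, Nat.cast_zero, add_zero]
  congr 3
  funext n
  push_cast
  ring_nf

lemma forwardCF_mem_Icc (k : ℤ) : forwardCF α k ∈ Icc (4 / 3 : ℝ) (11 / 4) := by
  have step : ∀ {lo hi : ℝ} (m : ℤ), 0 < lo → forwardCF α (m + 1) ∈ Icc lo hi →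
      forwardCF α m ∈ Icc (1 + hi⁻¹) (2 + lo⁻¹) := by
    intro lo hi m hlo ⟨h1, h2⟩
    rw [forwardCF_eq_add_inv hα]
    have := digit_mem_Icc hα m
    exact ⟨by gcongr; exacts [this.1, hlo.trans_le h1], by gcongr; exact this.2⟩
  have h2 : forwardCF α (k + 2) ∈ Icc (1 : ℝ) 3 := cfVal_mem_Icc fun n => digit_mem_Icc hα _
  have h1 := step (k + 1) one_pos (by rwa [add_assoc, one_add_one_eq_two])
  have h0 := step k (by norm_num) h1
  norm_num at h0
  exact h0

lemma lambdaVal_eq (k : ℤ) :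
    lambdaVal α k = forwardCF α k + (forwardCF (seqRev α) (1 - k))⁻¹ := by
  rw [lambdaVal, cfVal_eq_add_inv (a := fun n => if n = 0 then 0 else (α (k - n) : ℝ))]
  · simp only [if_pos, Nat.add_one_ne_zero, if_false, zero_add, forwardCF, seqRev]
    congr 3
    funext n
    congr 2
    push_cast
    ring
  · intro n
    simpa only [Nat.add_one_ne_zero, if_false] using digit_mem_Icc hα _

lemma lambdaVal_seqRev (k : ℤ) : lambdaVal (seqRev α) (-k) = lambdaVal α k := by
  have hα' := seqRev_eq_one_or_two hα
  rw [lambdaVal_eq hα', lambdaVal_eq hα, forwardCF_eq_add_inv hα', forwardCF_eq_add_inv hα,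
    seqRev_seqRev, seqRev, neg_neg, sub_neg_eq_add, add_comm 1 k, neg_add_eq_sub]
  ring_nf

lemma lambdaVal_le (k : ℤ) : lambdaVal α k ≤ α k + 3 / 2 := by
  have hf := forwardCF_mem_Icc hα (k + 1)
  have hr := forwardCF_mem_Icc (seqRev_eq_one_or_two hα) (1 - k)
  have hf' : (forwardCF α (k + 1))⁻¹ ≤ 3 / 4 :=
    inv_le_of_inv_le₀ (by norm_num) (by linarith [hf.1])
  have hr' : (forwardCF (seqRev α) (1 - k))⁻¹ ≤ 3 / 4 :=
    inv_le_of_inv_le₀ (by norm_num) (by linarith [hr.1])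
  rw [lambdaVal_eq hα, forwardCF_eq_add_inv hα]
  linarith

lemma bddAbove_range_lambdaVal : BddAbove (range (lambdaVal α)) := by
  refine ⟨7 / 2, ?_⟩
  rintro _ ⟨k, rfl⟩
  have := (digit_mem_Icc hα k).2
  linarith [lambdaVal_le hα k]

end DigitsOneOrTwo

noncomputable def cfWithTail : List ℕ → ℝ → ℝ
  | [], x => x
  | d :: w, x => d + (cfWithTail w x)⁻¹

lemma cfWithTail_pos (w : List ℕ) {x : ℝ} (hx : 0 < x) : 0 < cfWithTail w x := by
  induction w with
  | nil => exact hx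
  | cons d w ih => simp only [cfWithTail]; positivity

lemma inv_mem_uIcc {K : Type*} [Field K] [LinearOrder K] [IsStrictOrderedRing K] {x y z : K}
    (hy : 0 < y) (hz : 0 < z) (hx : x ∈ uIcc y z) : x⁻¹ ∈ uIcc y⁻¹ z⁻¹ := by
  rcases mem_uIcc.1 hx with ⟨h1, h2⟩ | ⟨h1, h2⟩
  · exact mem_uIcc.2 (Or.inr ⟨inv_anti₀ (hy.trans_le h1) h2, inv_anti₀ hy h1⟩)
  · exact mem_uIcc.2 (Or.inl ⟨inv_anti₀ (hz.trans_le h1) h2, inv_anti₀ hz h1⟩)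

/-- A finite continued fraction is monotone or antitone in its last entry. -/
lemma cfWithTail_mem_uIcc (w : List ℕ) {x y z : ℝ} (hy : 0 < y) (hz : 0 < z)
    (hx : x ∈ uIcc y z) : cfWithTail w x ∈ uIcc (cfWithTail w y) (cfWithTail w z) := by
  induction w with
  | nil => exact hx
  | cons d w ih =>
    simp only [cfWithTail]
    rcases mem_uIcc.1 (inv_mem_uIcc (cfWithTail_pos w hy) (cfWithTail_pos w hz) ih) with
      ⟨h1, h2⟩ | ⟨h1, h2⟩
    · exact mem_uIcc.2 (Or.inl ⟨by linarith, by linarith⟩)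
    · exact mem_uIcc.2 (Or.inr ⟨by linarith, by linarith⟩)

/-- `hasFactor α w` unfolds to `∃ p, OccursAt α w p`. -/
def OccursAt (α : ℤ → ℕ) (w : List ℕ) (p : ℤ) : Prop :=
  ∀ i : Fin w.length, α (p + i) = w.get i

section Words

variable {α : ℤ → ℕ}

lemma occursAt_nil (p : ℤ) : OccursAt α [] p := fun i => i.elim0

lemma occursAt_cons {d : ℕ} {w : List ℕ} {p : ℤ} :
    OccursAt α (d :: w) p ↔ α p = d ∧ OccursAt α w (p + 1) := by
  constructor
  · intro h
    refine ⟨by simpa using h 0, fun i => ?_⟩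
    simpa [add_assoc, add_comm (1 : ℤ)] using h i.succ
  · rintro ⟨h0, h⟩ i
    refine Fin.cases (by simpa using h0) (fun i => ?_) i
    simpa [add_assoc, add_comm (1 : ℤ)] using h i

lemma occursAt_append {u v : List ℕ} {p : ℤ} :
    OccursAt α (u ++ v) p ↔ OccursAt α u p ∧ OccursAt α v (p + u.length) := by
  induction u generalizing p with
  | nil => simp [occursAt_nil]
  | cons d u ih =>
    simp only [List.cons_append, occursAt_cons, ih, List.length_cons, Nat.cast_add, Nat.cast_one]
    rw [add_assoc, add_comm (1 : ℤ)]
    tauto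

lemma OccursAt.reverse_seqRev {w : List ℕ} {p : ℤ} (h : OccursAt α w p) :
    OccursAt (seqRev α) w.reverse (1 - p - w.length) := by
  intro i
  have hi : (i : ℕ) < w.length := by simpa using i.2
  have := h ⟨w.length - 1 - i, by omega⟩
  simp only [List.get_eq_getElem, List.getElem_reverse] at this ⊢
  rw [← this, seqRev]
  congr 1
  omega

lemma OccursAt.reverse_of_seqRev {w : List ℕ} {q : ℤ} (h : OccursAt (seqRev α) w q) :
    OccursAt α w.reverse (1 - q - w.length) := by
  simpa only [seqRev_seqRev] using h.reverse_seqRev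

lemma forwardCF_eq_cfWithTail (hα : ∀ n, α n = 1 ∨ α n = 2) {w : List ℕ} {p : ℤ}
    (h : OccursAt α w p) : forwardCF α p = cfWithTail w (forwardCF α (p + w.length)) := by
  induction w generalizing p with
  | nil => simp [cfWithTail]
  | cons d w ih =>
    obtain ⟨hd, hw⟩ := occursAt_cons.1 h
    rw [forwardCF_eq_add_inv hα, ih hw, hd, cfWithTail, List.length_cons, Nat.cast_add,
      Nat.cast_one, add_assoc, add_comm (1 : ℤ)]

lemma lambdaVal_ge_of_occursAt (hα : ∀ n, α n = 1 ∨ α n = 2) {w : List ℕ} {p : ℤ}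
    (h : OccursAt α w p) {m : ℕ} (hm : m ≤ w.length) :
    min (cfWithTail (w.drop m) (4 / 3)) (cfWithTail (w.drop m) (11 / 4)) +
      (max (cfWithTail (w.take m).reverse (4 / 3)) (cfWithTail (w.take m).reverse (11 / 4)))⁻¹
      ≤ lambdaVal α (p + m) := by
  rw [← List.take_append_drop m w, occursAt_append, List.length_take_of_le hm] at h
  have hα' := seqRev_eq_one_or_two hα
  have hF := forwardCF_eq_cfWithTail hα h.2
  have hB := forwardCF_eq_cfWithTail hα' h.1.reverse_seqRev
  rw [List.length_take_of_le hm] at hB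
  have hFm : forwardCF α (p + m) ∈
      uIcc (cfWithTail (w.drop m) (4 / 3)) (cfWithTail (w.drop m) (11 / 4)) := by
    rw [hF]
    exact cfWithTail_mem_uIcc _ (by norm_num) (by norm_num)
      (Icc_subset_uIcc (forwardCF_mem_Icc hα _))
  have hBm : forwardCF (seqRev α) (1 - (p + m)) ∈
      uIcc (cfWithTail (w.take m).reverse (4 / 3)) (cfWithTail (w.take m).reverse (11 / 4)) := by
    rw [← sub_sub, hB]
    exact cfWithTail_mem_uIcc _ (by norm_num) (by norm_num)
      (Icc_subset_uIcc (forwardCF_mem_Icc hα' _))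
  have hpos : 0 < forwardCF (seqRev α) (1 - (p + m)) := by
    linarith [(forwardCF_mem_Icc hα' (1 - (p + m))).1]
  rw [lambdaVal_eq hα]
  exact add_le_add hFm.1 (inv_anti₀ hpos hBm.2)

end Words

lemma sqrt85_lt : √85 < 461 / 50 := by
  rw [Real.sqrt_lt' (by norm_num)]
  norm_num

lemma add_inv_eq_sqrt85_div_three {x : ℝ} (hx : 0 < x) (h : x = cfWithTail [2, 1, 2] x) :
    x + x⁻¹ = √85 / 3 := by
  have hq : 3 * x ^ 2 - 7 * x - 3 = 0 := by
    simp only [cfWithTail, Nat.cast_ofNat, Nat.cast_one] at h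
    field_simp at h
    linear_combination h
  rw [eq_div_iff (by norm_num), eq_comm, Real.sqrt_eq_iff_mul_self_eq_of_pos (by positivity)]
  field_simp
  linear_combination (3 * x ^ 2 + 7 * x - 3) * hq

lemma per212_eq_one_or_two (n : ℤ) : per212 n = 1 ∨ per212 n = 2 := by
  unfold per212
  split_ifs <;> simp

lemma per212_comp_add_three_mul (q : ℤ) : (fun n => per212 (n + 3 * q)) = per212 := by
  funext n
  simp only [per212, Int.add_mul_emod_self_left]

lemma seqRev_per212 : seqRev per212 = fun n => per212 (n + 2) := by
  funext n
  simp only [seqRev, per212]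
  split_ifs <;> omega

lemma occursAt_per212 : OccursAt per212 [2, 1, 2] 0 := by
  unfold OccursAt
  decide

lemma lambdaVal_per212_zero : lambdaVal per212 0 = √85 / 3 := by
  have hα := per212_eq_one_or_two
  have hper : forwardCF per212 3 = forwardCF per212 0 := by
    rw [← zero_add 3, ← forwardCF_comp_add]
    simpa using congrArg (forwardCF · 0) (per212_comp_add_three_mul 1)
  have hx : forwardCF per212 0 = cfWithTail [2, 1, 2] (forwardCF per212 0) := by
    simpa [hper] using forwardCF_eq_cfWithTail hα occursAt_per212
  have hx0 : 0 < forwardCF per212 0 := by linarith [(forwardCF_mem_Icc hα 0).1]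
  rw [lambdaVal_eq hα, seqRev_per212, forwardCF_comp_add, sub_zero,
    show (1 : ℤ) + 2 = 3 by norm_num, hper]
  exact add_inv_eq_sqrt85_div_three hx0 hx

lemma lambdaVal_per212_le (k : ℤ) : lambdaVal per212 k ≤ lambdaVal per212 0 := by
  conv_lhs => rw [← Int.emod_add_mul_ediv k 3, ← lambdaVal_comp_add, per212_comp_add_three_mul]
  have : k % 3 = 0 ∨ k % 3 = 1 ∨ k % 3 = 2 := by omega
  rcases this with h | h | h
  · rw [h]
  · rw [h]
    have h15 : (15 / 2 : ℝ) < √85 := by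
      rw [Real.lt_sqrt (by norm_num)]
      norm_num
    have := lambdaVal_le per212_eq_one_or_two 1
    rw [lambdaVal_per212_zero]
    norm_num [per212] at this
    linarith
  · rw [h, ← lambdaVal_seqRev per212_eq_one_or_two, seqRev_per212, lambdaVal_comp_add]
    norm_num

lemma markovValue_per212 : markovValue per212 = lambdaVal per212 0 :=
  le_antisymm (ciSup_le lambdaVal_per212_le)
    (le_ciSup (bddAbove_range_lambdaVal per212_eq_one_or_two) 0)

lemma lambdaVal_per212_zero_eq_cfVal : lambdaVal per212 0 =
    cfVal (fun n => if n = 0 then 2 else if n % 3 = 1 then 1 else 2) +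
      cfVal (fun n => if n = 0 then 0 else if n % 3 = 2 then 1 else 2) := by
  unfold lambdaVal per212
  congr 1 <;> congr 1 <;> funext n <;> split_ifs <;> first | omega | norm_num

section Forcing

variable {α : ℤ → ℕ} (hα : ∀ n, α n = 1 ∨ α n = 2)
  (hlt : ∀ k, lambdaVal α k < √85 / 3)
include hα hlt

lemma lambdaVal_seqRev_lt (k : ℤ) : lambdaVal (seqRev α) k < √85 / 3 := by
  rw [← neg_neg k, lambdaVal_seqRev hα]
  exact hlt _

lemma not_occursAt_of_le_min {w : List ℕ} {m : ℕ} (hm : m ≤ w.length)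
    (hw : 461 / 150 ≤ min (cfWithTail (w.drop m) (4 / 3)) (cfWithTail (w.drop m) (11 / 4)) +
      (max (cfWithTail (w.take m).reverse (4 / 3)) (cfWithTail (w.take m).reverse (11 / 4)))⁻¹)
    (p : ℤ) : ¬ OccursAt α w p := fun h => by
  linarith [lambdaVal_ge_of_occursAt hα h hm, hlt (p + m), sqrt85_lt]

lemma not_occursAt_2121 : ∀ p, ¬ OccursAt α [2, 1, 2, 1] p :=
  not_occursAt_of_le_min hα hlt (m := 0) (by simp) (by norm_num [cfWithTail])

lemma not_occursAt_221222 : ∀ p, ¬ OccursAt α [2, 2, 1, 2, 2, 2] p :=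
  not_occursAt_of_le_min hα hlt (m := 3) (by simp) (by norm_num [cfWithTail])

lemma not_occursAt_2212211 : ∀ p, ¬ OccursAt α [2, 2, 1, 2, 2, 1, 1] p :=
  not_occursAt_of_le_min hα hlt (m := 3) (by simp) (by norm_num [cfWithTail])

lemma OccursAt.extend_212_right {p : ℤ} (h : OccursAt α [2, 1, 2] p) :
    OccursAt α [2, 1, 2, 2] p := by
  simp only [occursAt_cons, occursAt_nil, and_true, add_assoc, Int.reduceAdd] at h ⊢
  obtain ⟨h0, h1, h2⟩ := h
  refine ⟨h0, h1, h2, (hα _).resolve_left fun h3 => not_occursAt_2121 hα hlt p ?_⟩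
  simp only [occursAt_cons, occursAt_nil, and_true, add_assoc, Int.reduceAdd]
  exact ⟨h0, h1, h2, h3⟩

lemma OccursAt.shift_22122_add_three {p : ℤ} (h : OccursAt α [2, 2, 1, 2, 2] p) :
    OccursAt α [2, 2, 1, 2, 2] (p + 3) := by
  simp only [occursAt_cons, occursAt_nil, and_true, add_assoc, Int.reduceAdd] at h ⊢
  obtain ⟨h0, h1, h2, h3, h4⟩ := h
  have h5 : α (p + 5) = 1 := (hα _).resolve_right fun h5 => not_occursAt_221222 hα hlt p <| by
    simp only [occursAt_cons, occursAt_nil, and_true, add_assoc, Int.reduceAdd]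
    exact ⟨h0, h1, h2, h3, h4, h5⟩
  have h6 : α (p + 6) = 2 := (hα _).resolve_left fun h6 => not_occursAt_2212211 hα hlt p <| by
    simp only [occursAt_cons, occursAt_nil, and_true, add_assoc, Int.reduceAdd]
    exact ⟨h0, h1, h2, h3, h4, h5, h6⟩
  have h7 : α (p + 7) = 2 := (hα _).resolve_left fun h7 => not_occursAt_2121 hα hlt (p + 4) <| by
    simp only [occursAt_cons, occursAt_nil, and_true, add_assoc, Int.reduceAdd]
    exact ⟨h4, h5, h6, h7⟩
  exact ⟨h3, h4, h5, h6, h7⟩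

lemma OccursAt.extend_212_both {p : ℤ} (h : OccursAt α [2, 1, 2] p) :
    OccursAt α [2, 2, 1, 2, 2] (p - 1) := by
  have hr : OccursAt α [2, 2, 1, 2] (p - 1) := by
    convert (h.reverse_seqRev.extend_212_right (seqRev_eq_one_or_two hα)
      (lambdaVal_seqRev_lt hα hlt)).reverse_of_seqRev using 1
    · rfl
    · simp only [List.length_cons, List.length_nil]
      ring
  rw [occursAt_cons, sub_add_cancel]
  exact ⟨(occursAt_cons.1 hr).1, h.extend_212_right hα hlt⟩

lemma OccursAt.shift_22122_sub_three {p : ℤ} (h : OccursAt α [2, 2, 1, 2, 2] p) :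
    OccursAt α [2, 2, 1, 2, 2] (p - 3) := by
  convert (h.reverse_seqRev.shift_22122_add_three (seqRev_eq_one_or_two hα)
    (lambdaVal_seqRev_lt hα hlt)).reverse_of_seqRev using 1
  · rfl
  · simp only [List.length_cons, List.length_nil]
    ring

lemma OccursAt.shift_22122_add_three_mul {p : ℤ} (h : OccursAt α [2, 2, 1, 2, 2] p) (n : ℤ) :
    OccursAt α [2, 2, 1, 2, 2] (p + 3 * n) := by
  induction n using Int.induction_on with
  | zero => simpa using h
  | succ n ih =>
    rw [mul_add, mul_one, ← add_assoc]
    exact ih.shift_22122_add_three hα hlt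
  | pred n ih =>
    rw [mul_sub, mul_one, ← add_sub_assoc]
    exact ih.shift_22122_sub_three hα hlt

lemma OccursAt.comp_add_eq_per212 {p : ℤ} (h : OccursAt α [2, 1, 2] p) :
    (fun n => α (n + p)) = per212 := by
  funext i
  have hw := (h.extend_212_both hα hlt).shift_22122_add_three_mul hα hlt (i / 3)
  simp only [occursAt_cons, occursAt_nil, and_true, add_assoc, Int.reduceAdd] at hw
  obtain ⟨-, h0, h1, h2, -⟩ := hw
  have hi := Int.emod_add_mul_ediv i 3
  have : i % 3 = 0 ∨ i % 3 = 1 ∨ i % 3 = 2 := by omega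
  unfold per212
  rcases this with hr | hr | hr
  · rw [if_neg (by omega), ← h0]
    congr 1
    omega
  · rw [if_pos hr, ← h1]
    congr 1
    omega
  · rw [if_neg (by omega), ← h2]
    congr 1
    omega

end Forcing

theorem sqrt85_div_three_le_markovValue {α : ℤ → ℕ} (hα : ∀ n, α n = 1 ∨ α n = 2)
    (h : hasFactor α [2, 1, 2]) : √85 / 3 ≤ markovValue α := by
  by_contra! hm
  have hlt : ∀ k, lambdaVal α k < √85 / 3 :=
    fun k => (le_ciSup (bddAbove_range_lambdaVal hα) k).trans_lt hm
  obtain ⟨p, hp⟩ := h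
  have hp' : OccursAt α [2, 1, 2] p := hp
  have := hlt p
  rw [← zero_add p, ← lambdaVal_comp_add, hp'.comp_add_eq_per212 hα hlt,
    lambdaVal_per212_zero] at this
  exact lt_irrefl _ this

/-- Every `α ∈ {1,2}^ℤ` containing the factor `(2,1,2)` has Markov value at least
`√85/3`, attained by the periodic sequence of period `(2,1,2)`, whose Markov value
is `[2; \overline{1,2,2}] + [0; \overline{2,1,2}] = √85/3`. Thus `√85/3` is the
smallest Markov value among `{1,2}`-sequences containing the factor `(2,1,2)`. -/
theorem smallest_markov_value_with_212 :
    (∀ α : ℤ → ℕ, (∀ n, α n = 1 ∨ α n = 2) → hasFactor α [2, 1, 2] →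
      Real.sqrt 85 / 3 ≤ markovValue α) ∧
    (∀ n, per212 n = 1 ∨ per212 n = 2) ∧
    hasFactor per212 [2, 1, 2] ∧
    markovValue per212 =
      cfVal (fun n => if n = 0 then 2 else if n % 3 = 1 then 1 else 2) +
        cfVal (fun n => if n = 0 then 0 else if n % 3 = 2 then 1 else 2) ∧
    cfVal (fun n => if n = 0 then 2 else if n % 3 = 1 then 1 else 2) +
        cfVal (fun n => if n = 0 then 0 else if n % 3 = 2 then 1 else 2) =
      Real.sqrt 85 / 3 := by
  refine ⟨fun α hα h => sqrt85_div_three_le_markovValue hα h, per212_eq_one_or_two,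
    ⟨0, occursAt_per212⟩, ?_, ?_⟩
  · rw [markovValue_per212, lambdaVal_per212_zero_eq_cfVal]
  · rw [← lambdaVal_per212_zero_eq_cfVal, lambdaVal_per212_zero]
end
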